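/- There exists a maximal ideal I on ℕ such that t(I) is not a T-maximal ideal. Specifically, if B = {b_n : n ∈ ℕ} with b_{n+1} − b_n strictly increasing to infinity, and I is a maximal ideal containing ℕ \ B, then for any k_1,...,k_n ∈ ℤ the set ℕ \ ((B+k_1) ∪ ... ∪ (B+k_n)) is not in t(I); hence t(I) ∪ {B} extends to a translation invariant ideal strictly containing t(I). -/
import Mathlib


open Set Filter
open scoped Classical

/-- The shift of a set of naturals by an integer `k`, i.e. `(A + k) ∩ ℕ`. -/
def shiftSet (A : Set ℕ) (k : ℤ) : Set ℕ := {n : ℕ | ∃ a ∈ A, (a : ℤ) + k = (n : ℤ)}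

/-- An ideal on ℕ. -/
def IsIdeal (I : Set (Set ℕ)) : Prop :=
  (∀ A B : Set ℕ, A ∈ I → B ∈ I → A ∪ B ∈ I) ∧
  (∀ A B : Set ℕ, A ⊆ B → B ∈ I → A ∈ I) ∧
  (∀ A : Set ℕ, A.Finite → A ∈ I) ∧
  (Set.univ : Set ℕ) ∉ I

/-- A translation invariant ideal on ℕ. -/
def TransInvIdeal (I : Set (Set ℕ)) : Prop :=
  IsIdeal I ∧ ∀ A ∈ I, ∀ k : ℤ, shiftSet A k ∈ I

/-- An abstract upper density on ℕ. -/
def IsAUD (δ : Set ℕ → ℝ) : Prop :=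
  (∀ A : Set ℕ, 0 ≤ δ A ∧ δ A ≤ 1) ∧
  δ Set.univ = 1 ∧
  (∀ A : Set ℕ, A.Finite → δ A = 0) ∧
  (∀ A B : Set ℕ, A ⊆ B → δ A ≤ δ B) ∧
  (∀ A B : Set ℕ, δ (A ∪ B) ≤ δ A + δ B)

/-- A translation invariant density. -/
def TransInvAUD (δ : Set ℕ → ℝ) : Prop := ∀ (A : Set ℕ) (k : ℤ), δ (shiftSet A k) = δ A

/-- A rich density: onto [0,1]. -/
def Rich (δ : Set ℕ → ℝ) : Prop := ∀ r ∈ Set.Icc (0:ℝ) 1, ∃ A : Set ℕ, δ A = r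

/-- The family of null sets of a density. -/
def ZSet (δ : Set ℕ → ℝ) : Set (Set ℕ) := {A | δ A = 0}

/-- An `I`-almost disjoint family. -/
def IsADFamily (I : Set (Set ℕ)) (𝒜 : Set (Set ℕ)) : Prop :=
  (∀ A ∈ 𝒜, A ∉ I) ∧ ∀ A ∈ 𝒜, ∀ B ∈ 𝒜, A ≠ B → A ∩ B ∈ I

/-- An `I`-translation almost disjoint family. -/
def IsTADFamily (I : Set (Set ℕ)) (𝒜 : Set (Set ℕ)) : Prop :=
  (∀ A ∈ 𝒜, A ∉ I) ∧ ∀ A ∈ 𝒜, ∀ B ∈ 𝒜, A ≠ B → ∀ k : ℤ, A ∩ shiftSet B k ∈ I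

/-- A maximal ideal on ℕ. -/
def MaximalIdeal (I : Set (Set ℕ)) : Prop :=
  IsIdeal I ∧ ∀ J : Set (Set ℕ), IsIdeal J → I ⊆ J → I = J

/-- An ideal on a subset `X` of ℕ. -/
def IsIdealOn (X : Set ℕ) (I : Set (Set ℕ)) : Prop :=
  (∀ A ∈ I, A ⊆ X) ∧
  (∀ A B : Set ℕ, A ∈ I → B ∈ I → A ∪ B ∈ I) ∧
  (∀ A B : Set ℕ, A ⊆ B → B ∈ I → A ∈ I) ∧
  (∀ A : Set ℕ, A ⊆ X → A.Finite → A ∈ I) ∧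
  X ∉ I

/-- A maximal ideal on a subset `X` of ℕ. -/
def MaximalIdealOn (X : Set ℕ) (I : Set (Set ℕ)) : Prop :=
  IsIdealOn X I ∧ ∀ A : Set ℕ, A ⊆ X → (A ∈ I ∨ X \ A ∈ I)

/-- The translation-invariant kernel of an ideal. -/
def tIdeal (I : Set (Set ℕ)) : Set (Set ℕ) := {A | ∀ k : ℤ, shiftSet A k ∈ I}

/-- A T-maximal ideal: maximal among translation invariant ideals. -/
def TMaximalIdeal (I : Set (Set ℕ)) : Prop :=
  TransInvIdeal I ∧ ∀ J : Set (Set ℕ), TransInvIdeal J → I ⊆ J → I = J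


lemma shiftSet_mono' {A A' : Set ℕ} (h : A ⊆ A') (k : ℤ) : shiftSet A k ⊆ shiftSet A' k := by
  rintro n ⟨a, ha, hak⟩; exact ⟨a, h ha, hak⟩

lemma shiftSet_zero' (A : Set ℕ) : shiftSet A 0 = A := by
  ext n
  constructor
  · rintro ⟨a, ha, hak⟩
    have : a = n := by omega
    rwa [← this]
  · intro hn; exact ⟨n, hn, by ring⟩

lemma shiftSet_comp' (A : Set ℕ) (k l : ℤ) : shiftSet (shiftSet A k) l ⊆ shiftSet A (k + l) := by
  rintro n ⟨m, ⟨a, ha, hak⟩, hml⟩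
  exact ⟨a, ha, by omega⟩

lemma shiftSet_finite' {A : Set ℕ} (h : A.Finite) (k : ℤ) : (shiftSet A k).Finite := by
  have h2 : ((fun a : ℕ => ((a : ℤ) + k).toNat) '' A).Finite := h.image _
  apply h2.subset
  rintro n ⟨a, ha, hak⟩
  exact ⟨a, ha, by simp only; omega⟩

lemma shiftSet_union' (A B : Set ℕ) (k : ℤ) :
    shiftSet (A ∪ B) k = shiftSet A k ∪ shiftSet B k := by
  ext n
  constructor
  · rintro ⟨a, ha | ha, hk⟩
    exacts [Or.inl ⟨a, ha, hk⟩, Or.inr ⟨a, ha, hk⟩]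
  · rintro (⟨a, ha, hk⟩ | ⟨a, ha, hk⟩)
    exacts [⟨a, Or.inl ha, hk⟩, ⟨a, Or.inr ha, hk⟩]

lemma tIdeal_trans' {I : Set (Set ℕ)} (hI : IsIdeal I) : TransInvIdeal (tIdeal I) := by
  obtain ⟨hu, hs, hf, hv⟩ := hI
  refine ⟨⟨?_, ?_, ?_, ?_⟩, ?_⟩
  · intro A B hA hB k
    rw [shiftSet_union']
    exact hu _ _ (hA k) (hB k)
  · intro A B hAB hB k
    exact hs _ _ (shiftSet_mono' hAB k) (hB k)
  · intro A hA k
    exact hf _ (shiftSet_finite' hA k)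
  · intro h
    have h0 := h 0
    rw [shiftSet_zero'] at h0
    exact hv h0
  · intro A hA l k
    exact hs _ _ (shiftSet_comp' A l k) (hA (l + k))

lemma key_finite' (b : ℕ → ℕ) (hb : StrictMono b)
    (hgap : StrictMono (fun n => b (n+1) - b n)) (m : ℤ) (hm : m ≠ 0) :
    (Set.range b ∩ shiftSet (Set.range b) m).Finite := by
  have hgap2 : ∀ j : ℕ, (b j : ℤ) + j ≤ b (j+1) := by
    intro j
    have h1 : j ≤ (fun n => b (n+1) - b n) j := hgap.le_apply
    have h2 : b j ≤ b (j+1) := (hb (Nat.lt_succ_self j)).le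
    simp only at h1
    omega
  apply Set.Finite.subset (((Set.finite_Iic m.natAbs).image b).union
      ((Set.finite_Iic m.natAbs).image (fun j => ((b j : ℤ) + m).toNat)))
  rintro n ⟨⟨i, rfl⟩, a, ⟨j, rfl⟩, hk⟩
  rcases lt_trichotomy i j with h | h | h
  · left
    refine ⟨i, ?_, rfl⟩
    have h1 := hgap2 i
    have h2 : b (i+1) ≤ b j := hb.monotone h
    simp only [Set.mem_Iic]
    omega
  · exfalso
    subst h
    omega
  · right
    refine ⟨j, ?_, ?_⟩
    · have h1 := hgap2 j
      have h2 : b (j+1) ≤ b i := hb.monotone h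
      simp only [Set.mem_Iic]
      omega
    · have h3 : b j < b i := hb h
      simp only
      omega

lemma part1' (b : ℕ → ℕ) (hb : StrictMono b)
    (hgap : StrictMono (fun n => b (n+1) - b n))
    (I : Set (Set ℕ)) (hI : IsIdeal I) (hBc : (Set.range b)ᶜ ∈ I) :
    ∀ s : Finset ℤ, (⋃ k ∈ s, shiftSet (Set.range b) k)ᶜ ∉ tIdeal I := by
  obtain ⟨hu, hs, hf, hv⟩ := hI
  intro s h
  set M : ℕ := s.sup (fun k => k.natAbs) with hM
  have hl := h ((M : ℤ) + 1)
  set C : Set ℕ := shiftSet ((⋃ k ∈ s, shiftSet (Set.range b) k)ᶜ) ((M : ℤ) + 1) with hC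
  -- the set of B-elements missed by the shift is finite
  have hfin : (Set.range b ∩ Cᶜ).Finite := by
    have hsub2 : Set.range b ∩ Cᶜ ⊆
        Set.Iio (M + 1) ∪ ⋃ k ∈ s, Set.range b ∩ shiftSet (Set.range b) (k + ((M : ℤ) + 1)) := by
      rintro n ⟨hnB, hnE⟩
      by_cases hn : n < M + 1
      · exact Or.inl hn
      · right
        push_neg at hn
        have hc : (n - (M + 1) : ℕ) ∉ (⋃ k ∈ s, shiftSet (Set.range b) k)ᶜ := by
          intro hc
          exact hnE ⟨n - (M + 1), hc, by omega⟩
        simp only [Set.mem_compl_iff, not_not, Set.mem_iUnion] at hc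
        simp only [Set.mem_iUnion]
        obtain ⟨k, hk, a, ha, hak⟩ := hc
        exact ⟨k, hk, hnB, a, ha, by omega⟩
    apply Set.Finite.subset _ hsub2
    apply (Set.finite_Iio _).union
    apply Set.Finite.biUnion s.finite_toSet
    intro k hk
    apply key_finite' b hb hgap
    have hkM : k.natAbs ≤ M := Finset.le_sup hk
    omega
  have huniv : (Set.univ : Set ℕ) ∈ I := by
    have hsub : (Set.univ : Set ℕ) ⊆ C ∪ ((Set.range b)ᶜ ∪ (Set.range b ∩ Cᶜ)) := by
      intro n _
      by_cases h1 : n ∈ C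
      · exact Or.inl h1
      by_cases h2 : n ∈ Set.range b
      · exact Or.inr (Or.inr ⟨h2, h1⟩)
      · exact Or.inr (Or.inl h2)
    exact hs _ _ hsub (hu _ _ hl (hu _ _ hBc (hf _ hfin)))
  exact hv huniv

theorem stmt17 (b : ℕ → ℕ) (hb : StrictMono b)
    (hgap : StrictMono (fun n => b (n+1) - b n))
    (hgap' : Filter.Tendsto (fun n => b (n+1) - b n) Filter.atTop Filter.atTop)
    (I : Set (Set ℕ)) (hI : MaximalIdeal I) (hBc : (Set.range b)ᶜ ∈ I) :
    (∀ s : Finset ℤ, (⋃ k ∈ s, shiftSet (Set.range b) k)ᶜ ∉ tIdeal I) ∧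
    (∃ J : Set (Set ℕ), TransInvIdeal J ∧ tIdeal I ⊆ J ∧ Set.range b ∈ J ∧ tIdeal I ≠ J) ∧
    ¬ TMaximalIdeal (tIdeal I) ∧
    (∃ I' : Set (Set ℕ), MaximalIdeal I' ∧ ¬ TMaximalIdeal (tIdeal I')) := by
  have hp1 := part1' b hb hgap I hI.1 hBc
  obtain ⟨⟨hu, hs, hf, hv⟩, hshift⟩ := tIdeal_trans' hI.1
  set J : Set (Set ℕ) :=
    {A | ∃ s : Finset ℤ, A \ (⋃ k ∈ s, shiftSet (Set.range b) k) ∈ tIdeal I} with hJdef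
  have hsubJ : tIdeal I ⊆ J := by
    intro A hA
    refine ⟨∅, hs _ _ Set.diff_subset hA⟩
  have hBJ : Set.range b ∈ J := by
    refine ⟨{0}, hs _ _ ?_ (hf ∅ Set.finite_empty)⟩
    rintro n ⟨hn, hnU⟩
    apply hnU
    simp only [Set.mem_iUnion]
    exact ⟨0, Finset.mem_singleton_self 0, n, hn, by ring⟩
  have hBnot : Set.range b ∉ tIdeal I := by
    intro h
    have h0 := h 0
    rw [shiftSet_zero'] at h0
    have huniv : (Set.univ : Set ℕ) ∈ I := by
      rw [← Set.union_compl_self (Set.range b)]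
      exact hI.1.1 _ _ h0 hBc
    exact hI.1.2.2.2 huniv
  have hJtrans : TransInvIdeal J := by
    refine ⟨⟨?_, ?_, ?_, ?_⟩, ?_⟩
    · rintro A B ⟨s1, h1⟩ ⟨s2, h2⟩
      refine ⟨s1 ∪ s2, hs _ _ ?_ (hu _ _ h1 h2)⟩
      rintro n ⟨hn | hn, hnU⟩
      · refine Or.inl ⟨hn, fun hmem => hnU ?_⟩
        simp only [Set.mem_iUnion] at hmem ⊢
        obtain ⟨k, hk, h'⟩ := hmem
        exact ⟨k, Finset.mem_union_left _ hk, h'⟩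
      · refine Or.inr ⟨hn, fun hmem => hnU ?_⟩
        simp only [Set.mem_iUnion] at hmem ⊢
        obtain ⟨k, hk, h'⟩ := hmem
        exact ⟨k, Finset.mem_union_right _ hk, h'⟩
    · rintro A B hAB ⟨s, hsB⟩
      refine ⟨s, hs _ _ ?_ hsB⟩
      intro n hn
      exact ⟨hAB hn.1, hn.2⟩
    · intro A hA
      exact ⟨∅, hs _ _ Set.diff_subset (hf A hA)⟩
    · rintro ⟨s, hsu⟩
      apply hp1 s
      rw [Set.compl_eq_univ_diff]
      exact hsu
    · rintro A ⟨s, hsA⟩ l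
      refine ⟨s.image (· + l), hs _ _ ?_ (hshift _ hsA l)⟩
      rintro n ⟨⟨a, ha, hal⟩, hnU⟩
      refine ⟨a, ⟨ha, fun hmem => hnU ?_⟩, hal⟩
      simp only [Set.mem_iUnion] at hmem ⊢
      obtain ⟨k, hk, x, hx, hxk⟩ := hmem
      exact ⟨k + l, Finset.mem_image.mpr ⟨k, hk, rfl⟩, x, hx, by omega⟩
  have hne : tIdeal I ≠ J := by
    intro heq
    rw [heq] at hBnot
    exact hBnot hBJ
  have hnotT : ¬ TMaximalIdeal (tIdeal I) := by
    rintro ⟨-, hmax⟩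
    exact hne (hmax J hJtrans hsubJ)
  exact ⟨hp1, ⟨J, hJtrans, hsubJ, hBJ, hne⟩, hnotT, I, hI, hnotT⟩
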